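/- arXiv:2407.11411 — 2 statements merged into one kernel-verified Lean document; each statement's English description precedes it below -/
import Mathlib

section
/- Let H and K be groups and let M be a normal subgroup of the direct product G = H × K such that M ∩ (H × {1}) and M ∩ ({1} × K) are both trivial. Then M is contained in the center of G. -/
open SimpleGraph

namespace OG4

variable {V : Type*} {W : Type*}

/-! ### Normal quotients, cycles, and basic pairs -/

/-- The setoid of orbits of a group `N` of permutations of `V`. -/
def orbitSetoid (N : Subgroup (Equiv.Perm V)) : Setoid V := MulAction.orbitRel N V

/-- The (normal) quotient graph of a graph `Γ` with respect to a group `N` of permutations: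
its vertices are the `N`-orbits, two distinct orbits being adjacent iff some vertex of one is
adjacent in `Γ` to some vertex of the other. -/
def quotientGraph (Γ : SimpleGraph V) (N : Subgroup (Equiv.Perm V)) :
    SimpleGraph (Quotient (orbitSetoid N)) :=
  SimpleGraph.fromRel fun a b =>
    ∃ x y : V, Quotient.mk (orbitSetoid N) x = a ∧ Quotient.mk (orbitSetoid N) y = b ∧ Γ.Adj x y

/-- `N` is a normal subgroup of the subgroup `G` (of some ambient group). -/
def NormalIn {G : Type*} [Group G] (N H : Subgroup G) : Prop :=
  N ≤ H ∧ ∀ h ∈ H, ∀ n ∈ N, h * n * h⁻¹ ∈ N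

/-- A graph is isomorphic to a cycle graph `C_m` for some `m ≥ 3`. -/
def IsoCycle (Δ : SimpleGraph W) : Prop :=
  ∃ m : ℕ, 3 ≤ m ∧ Nonempty (Δ ≃g SimpleGraph.cycleGraph m)

/-- Every normal quotient of `(Γ, G)` relative to a nontrivial normal subgroup is degenerate:
it has at most 2 vertices or is a cycle. -/
def IsBasic (Γ : SimpleGraph V) (G : Subgroup (Equiv.Perm V)) : Prop :=
  ∀ N : Subgroup (Equiv.Perm V), NormalIn N G → N ≠ ⊥ →
    Nat.card (Quotient (orbitSetoid N)) ≤ 2 ∨ IsoCycle (quotientGraph Γ N)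

/-- `(Γ, G)` is basic of cycle type. -/
def BasicOfCycleType (Γ : SimpleGraph V) (G : Subgroup (Equiv.Perm V)) : Prop :=
  IsBasic Γ G ∧
    ∃ N : Subgroup (Equiv.Perm V), NormalIn N G ∧ N ≠ ⊥ ∧ IsoCycle (quotientGraph Γ N)

/-- The kernel of the action of `G` on the set of `N`-orbits. -/
def orbitKernel (G N : Subgroup (Equiv.Perm V)) : Subgroup (Equiv.Perm V) where
  carrier := {g | g ∈ G ∧ ∀ x : V,
    Quotient.mk (orbitSetoid N) (g x) = Quotient.mk (orbitSetoid N) x}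
  one_mem' := ⟨G.one_mem, fun x => by simp⟩
  mul_mem' := by
    rintro a b ⟨haG, ha⟩ ⟨hbG, hb⟩
    refine ⟨G.mul_mem haG hbG, fun x => ?_⟩
    rw [Equiv.Perm.mul_apply, ha (b x), hb x]
  inv_mem' := by
    rintro a ⟨haG, ha⟩
    refine ⟨G.inv_mem haG, fun x => ?_⟩
    have h := ha (a⁻¹ x)
    rw [show a (a⁻¹ x) = x by simp] at h
    exact h.symm

/-- `(Γ, G)` has a pair of independent cyclic normal quotients. -/
def HasIndepCyclicQuotients (Γ : SimpleGraph V) (G : Subgroup (Equiv.Perm V)) : Prop :=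
  ∃ N M : Subgroup (Equiv.Perm V), NormalIn N G ∧ NormalIn M G ∧
    IsoCycle (quotientGraph Γ N) ∧ IsoCycle (quotientGraph Γ M) ∧
    ¬ IsoCycle (quotientGraph Γ (orbitKernel G N ⊓ orbitKernel G M))

/-- `(Γ, G)` is basic of independent-cycle type. -/
def BasicOfIndependentCycleType (Γ : SimpleGraph V) (G : Subgroup (Equiv.Perm V)) : Prop :=
  IsBasic Γ G ∧ HasIndepCyclicQuotients Γ G

/-- Isomorphism of graph-group pairs: a graph isomorphism conjugating one group onto the other. -/
def PairIso (Γ : SimpleGraph V) (G : Subgroup (Equiv.Perm V))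
    (Δ : SimpleGraph W) (H : Subgroup (Equiv.Perm W)) : Prop :=
  ∃ e : Γ ≃g Δ, ∀ h : Equiv.Perm W, h ∈ H ↔ ∃ g ∈ G, e.toEquiv.permCongr g = h

/-! ### Minimal normal subgroups -/

/-- `M` is a minimal normal subgroup of the ambient group. -/
def IsMinimalNormal {G : Type*} [Group G] (M : Subgroup G) : Prop :=
  M.Normal ∧ M ≠ ⊥ ∧ ∀ N : Subgroup G, N.Normal → N ≤ M → N = ⊥ ∨ N = M

/-- `M` is a minimal normal subgroup of the subgroup `H`. -/
def IsMinimalNormalIn {G : Type*} [Group G] (M H : Subgroup G) : Prop :=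
  NormalIn M H ∧ M ≠ ⊥ ∧ ∀ N : Subgroup G, NormalIn N H → N ≤ M → N = ⊥ ∨ N = M

/-! ### The graphs `Γ(r,s)` and their automorphisms -/

/-- In `Γ(r,s)`, the vertex `(i,j)` is joined to the four vertices `(i ± 1, j ± 1)`. -/
def gammaRel (r s : ℕ) (x y : ZMod r × ZMod s) : Prop :=
  (y.1 = x.1 + 1 ∨ y.1 = x.1 - 1) ∧ (y.2 = x.2 + 1 ∨ y.2 = x.2 - 1)

/-- The graph `Γ(r,s)` on `ℤ_r × ℤ_s`. -/
def Gamma (r s : ℕ) : SimpleGraph (ZMod r × ZMod s) := SimpleGraph.fromRel (gammaRel r s)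

/-- `μ : (i,j) ↦ (i+1, j)`. -/
def mu (r s : ℕ) : Equiv.Perm (ZMod r × ZMod s) :=
  (Equiv.addRight (1 : ZMod r)).prodCongr (Equiv.refl (ZMod s))

/-- `ν : (i,j) ↦ (i, j+1)`. -/
def nu (r s : ℕ) : Equiv.Perm (ZMod r × ZMod s) :=
  (Equiv.refl (ZMod r)).prodCongr (Equiv.addRight (1 : ZMod s))

/-- `σ : (i,j) ↦ (-i, j)`. -/
def sigma (r s : ℕ) : Equiv.Perm (ZMod r × ZMod s) :=
  (Equiv.neg (ZMod r)).prodCongr (Equiv.refl (ZMod s))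

/-- `τ : (i,j) ↦ (-i, -j)`. -/
def tau (r s : ℕ) : Equiv.Perm (ZMod r × ZMod s) :=
  (Equiv.neg (ZMod r)).prodCongr (Equiv.neg (ZMod s))

/-- `σν : (i,j) ↦ (-i, j+1)`. -/
def sigmaNu (r s : ℕ) : Equiv.Perm (ZMod r × ZMod s) :=
  (Equiv.neg (ZMod r)).prodCongr (Equiv.addRight (1 : ZMod s))

/-- `μν : (i,j) ↦ (i+1, j+1)`. -/
def muNu (r s : ℕ) : Equiv.Perm (ZMod r × ZMod s) :=
  (Equiv.addRight (1 : ZMod r)).prodCongr (Equiv.addRight (1 : ZMod s))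

/-- `σμν : (i,j) ↦ (-(i+1), j+1)`. -/
def sigmaMuNu (r s : ℕ) : Equiv.Perm (ZMod r × ZMod s) :=
  ((Equiv.addRight (1 : ZMod r)).trans (Equiv.neg (ZMod r))).prodCongr
    (Equiv.addRight (1 : ZMod s))

/-- `μ² : (i,j) ↦ (i+2, j)`. -/
def muSq (r s : ℕ) : Equiv.Perm (ZMod r × ZMod s) :=
  (Equiv.addRight (2 : ZMod r)).prodCongr (Equiv.refl (ZMod s))

/-- `ν² : (i,j) ↦ (i, j+2)`. -/
def nuSq (r s : ℕ) : Equiv.Perm (ZMod r × ZMod s) :=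
  (Equiv.refl (ZMod r)).prodCongr (Equiv.addRight (2 : ZMod s))

/-- `μ^k : (i,j) ↦ (i+k, j)`. -/
def muPow (r s k : ℕ) : Equiv.Perm (ZMod r × ZMod s) :=
  (Equiv.addRight ((k : ZMod r))).prodCongr (Equiv.refl (ZMod s))

/-- `μ^k ν² : (i,j) ↦ (i+k, j+2)`. -/
def muPowNuSq (r s k : ℕ) : Equiv.Perm (ZMod r × ZMod s) :=
  (Equiv.addRight ((k : ZMod r))).prodCongr (Equiv.addRight (2 : ZMod s))

/-- `G(r,s) = ⟨μ, ν, σ⟩`. -/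
def Ggroup (r s : ℕ) : Subgroup (Equiv.Perm (ZMod r × ZMod s)) :=
  Subgroup.closure {mu r s, nu r s, sigma r s}

/-- `H(r,s) = ⟨μ, σν, τ⟩`. -/
def Hgroup (r s : ℕ) : Subgroup (Equiv.Perm (ZMod r × ZMod s)) :=
  Subgroup.closure {mu r s, sigmaNu r s, tau r s}

/-! ### The graphs `Γ⁺(r,s)` (for `r`, `s` even) -/

/-- `X⁺`: the set of `(i,j)` with `i` and `j` of the same parity. -/
def XPlus (r s : ℕ) : Set (ZMod r × ZMod s) := {x | x.1.val % 2 = x.2.val % 2}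

/-- `Γ⁺(r,s)`, the subgraph of `Γ(r,s)` induced on `X⁺`. -/
def GammaPlus (r s : ℕ) : SimpleGraph (XPlus r s) :=
  SimpleGraph.induce (XPlus r s) (Gamma r s)

section parity

lemma val_add_one_mod_two (r : ℕ) (hr : 2 ∣ r) (hr0 : r ≠ 0) (i : ZMod r) :
    (i + 1).val % 2 = (i.val + 1) % 2 := by
  haveI : NeZero r := ⟨hr0⟩
  haveI : Fact (1 < r) := ⟨by have := Nat.le_of_dvd (Nat.pos_of_ne_zero hr0) hr; omega⟩
  rw [ZMod.val_add, Nat.mod_mod_of_dvd _ hr, ZMod.val_one]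

lemma val_add_two_mod_two (r : ℕ) (hr : 2 ∣ r) (hr0 : r ≠ 0) (i : ZMod r) :
    (i + 2).val % 2 = i.val % 2 := by
  have h1 := val_add_one_mod_two r hr hr0 i
  have h2 := val_add_one_mod_two r hr hr0 (i + 1)
  rw [show i + 1 + 1 = i + 2 by ring] at h2
  omega

lemma val_neg_mod_two (r : ℕ) (hr : 2 ∣ r) (hr0 : r ≠ 0) (i : ZMod r) :
    (-i).val % 2 = i.val % 2 := by
  haveI : NeZero r := ⟨hr0⟩
  rcases eq_or_ne i 0 with h | h
  · simp [h]
  · have h1 : (-i).val = r - i.val := by rw [ZMod.neg_val]; simp [h]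
    have h2 : i.val < r := ZMod.val_lt i
    have h3 : i.val ≠ 0 := fun hh => h ((ZMod.val_eq_zero i).mp hh)
    obtain ⟨t, rfl⟩ := hr
    rw [h1]
    omega

end parity

section plusPerms

variable (r s : ℕ)

/-- The restriction of `μ²` to `X⁺`. -/
def muSqP (hr : 2 ∣ r) (hr0 : r ≠ 0) : Equiv.Perm (XPlus r s) :=
  (muSq r s).subtypePerm (by
    intro x
    have h := val_add_two_mod_two r hr hr0 x.1
    simp only [XPlus, Set.mem_setOf_eq, muSq, Equiv.prodCongr_apply, Prod.map,
      Equiv.coe_addRight, Equiv.refl_apply]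
    omega)

/-- The restriction of `ν²` to `X⁺`. -/
def nuSqP (hs : 2 ∣ s) (hs0 : s ≠ 0) : Equiv.Perm (XPlus r s) :=
  (nuSq r s).subtypePerm (by
    intro x
    have h := val_add_two_mod_two s hs hs0 x.2
    simp only [XPlus, Set.mem_setOf_eq, nuSq, Equiv.prodCongr_apply, Prod.map,
      Equiv.coe_addRight, Equiv.refl_apply]
    omega)

/-- The restriction of `μν` to `X⁺`. -/
def muNuP (hr : 2 ∣ r) (hr0 : r ≠ 0) (hs : 2 ∣ s) (hs0 : s ≠ 0) : Equiv.Perm (XPlus r s) :=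
  (muNu r s).subtypePerm (by
    intro x
    have h1 := val_add_one_mod_two r hr hr0 x.1
    have h2 := val_add_one_mod_two s hs hs0 x.2
    simp only [XPlus, Set.mem_setOf_eq, muNu, Equiv.prodCongr_apply, Prod.map,
      Equiv.coe_addRight]
    omega)

/-- The restriction of `σ` to `X⁺`. -/
def sigmaP (hr : 2 ∣ r) (hr0 : r ≠ 0) : Equiv.Perm (XPlus r s) :=
  (sigma r s).subtypePerm (by
    intro x
    have h := val_neg_mod_two r hr hr0 x.1
    simp only [XPlus, Set.mem_setOf_eq, sigma, Equiv.prodCongr_apply, Prod.map,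
      Equiv.neg_apply, Equiv.refl_apply]
    omega)

/-- The restriction of `τ` to `X⁺`. -/
def tauP (hr : 2 ∣ r) (hr0 : r ≠ 0) (hs : 2 ∣ s) (hs0 : s ≠ 0) : Equiv.Perm (XPlus r s) :=
  (tau r s).subtypePerm (by
    intro x
    have h1 := val_neg_mod_two r hr hr0 x.1
    have h2 := val_neg_mod_two s hs hs0 x.2
    simp only [XPlus, Set.mem_setOf_eq, tau, Equiv.prodCongr_apply, Prod.map,
      Equiv.neg_apply]
    omega)

/-- The restriction of `σμν` to `X⁺`. -/
def sigmaMuNuP (hr : 2 ∣ r) (hr0 : r ≠ 0) (hs : 2 ∣ s) (hs0 : s ≠ 0) :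
    Equiv.Perm (XPlus r s) :=
  (sigmaMuNu r s).subtypePerm (by
    intro x
    have h1 := val_neg_mod_two r hr hr0 (x.1 + 1)
    have h2 := val_add_one_mod_two r hr hr0 x.1
    have h3 := val_add_one_mod_two s hs hs0 x.2
    simp only [XPlus, Set.mem_setOf_eq, sigmaMuNu, Equiv.prodCongr_apply, Prod.map,
      Equiv.trans_apply, Equiv.coe_addRight, Equiv.neg_apply]
    omega)

/-- `G⁺(r,s) = ⟨μ², μν, σ⟩` acting on `X⁺`. -/
def GPlusGroup (hr : 2 ∣ r) (hr0 : r ≠ 0) (hs : 2 ∣ s) (hs0 : s ≠ 0) :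
    Subgroup (Equiv.Perm (XPlus r s)) :=
  Subgroup.closure {muSqP r s hr hr0, muNuP r s hr hr0 hs hs0, sigmaP r s hr hr0}

/-- `H⁺(r,s) = ⟨μ², σμν, τ⟩` acting on `X⁺`. -/
def HPlusGroup (hr : 2 ∣ r) (hr0 : r ≠ 0) (hs : 2 ∣ s) (hs0 : s ≠ 0) :
    Subgroup (Equiv.Perm (XPlus r s)) :=
  Subgroup.closure
    {muSqP r s hr hr0, sigmaMuNuP r s hr hr0 hs hs0, tauP r s hr hr0 hs hs0}

end plusPerms

/-! ### The standard double cover `Γ₂(r,s)` -/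

/-- Adjacency of the double cover: `(i,j)_δ ~ (i ± 1, j ± 1)_{δ+1}`. -/
def gamma2Rel (r s : ℕ) (x y : (ZMod r × ZMod s) × ZMod 2) : Prop :=
  (y.1.1 = x.1.1 + 1 ∨ y.1.1 = x.1.1 - 1) ∧ (y.1.2 = x.1.2 + 1 ∨ y.1.2 = x.1.2 - 1) ∧
    y.2 = x.2 + 1

/-- `Γ₂(r,s)`, the standard double cover of `Γ(r,s)`. -/
def Gamma2 (r s : ℕ) : SimpleGraph ((ZMod r × ZMod s) × ZMod 2) :=
  SimpleGraph.fromRel (gamma2Rel r s)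

/-- `μ : (i,j)_δ ↦ (i+1, j)_δ` on the double cover. -/
def muD (r s : ℕ) : Equiv.Perm ((ZMod r × ZMod s) × ZMod 2) :=
  (mu r s).prodCongr (Equiv.refl (ZMod 2))

/-- `ν : (i,j)_δ ↦ (i, j+1)_δ` on the double cover. -/
def nuD (r s : ℕ) : Equiv.Perm ((ZMod r × ZMod s) × ZMod 2) :=
  (nu r s).prodCongr (Equiv.refl (ZMod 2))

/-- `σ : (i,j)_δ ↦ (i, -j)_{δ+1}` on the double cover. -/
def sigmaD (r s : ℕ) : Equiv.Perm ((ZMod r × ZMod s) × ZMod 2) :=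
  ((Equiv.refl (ZMod r)).prodCongr (Equiv.neg (ZMod s))).prodCongr
    (Equiv.addRight (1 : ZMod 2))

/-- `τ : (i,j)_δ ↦ (-i, -j)_δ` on the double cover. -/
def tauD (r s : ℕ) : Equiv.Perm ((ZMod r × ZMod s) × ZMod 2) :=
  (tau r s).prodCongr (Equiv.refl (ZMod 2))

/-- `G₂(r,s) = ⟨μ, ν, σ, τ⟩` on the double cover. -/
def G2group (r s : ℕ) : Subgroup (Equiv.Perm ((ZMod r × ZMod s) × ZMod 2)) :=
  Subgroup.closure {muD r s, nuD r s, sigmaD r s, tauD r s}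

theorem mem_center_prod_of_commute {H K : Type*} [Group H] [Group K] {m : H × K}
    (hH : ∀ h : H, Commute m (h, 1)) (hK : ∀ k : K, Commute m (1, k)) :
    m ∈ Subgroup.center (H × K) :=
  Subgroup.mem_center_iff.2 fun g => by
    simpa using ((hH g.1).mul_right (hK g.2)).symm.eq

/-- a normal subgroup of `H × K` meeting both factors trivially is central. -/
theorem stmt13 (H K : Type*) [Group H] [Group K] (M : Subgroup (H × K)) (hM : M.Normal)
    (h1 : M ⊓ (⊤ : Subgroup H).prod (⊥ : Subgroup K) = ⊥)
    (h2 : M ⊓ (⊥ : Subgroup H).prod (⊤ : Subgroup K) = ⊥) :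
    M ≤ Subgroup.center (H × K) := fun m hm =>
  mem_center_prod_of_commute
    (fun h => Subgroup.commute_of_normal_of_disjoint _ _ hM inferInstance (disjoint_iff.2 h1)
      m (h, 1) hm (Subgroup.mem_prod.2 ⟨trivial, rfl⟩))
    (fun k => Subgroup.commute_of_normal_of_disjoint _ _ hM inferInstance (disjoint_iff.2 h2)
      m (1, k) hm (Subgroup.mem_prod.2 ⟨rfl, trivial⟩))

end OG4
end

section
/- Let p and q be odd primes (not necessarily distinct) and consider the permutations of ℤ_{2p} × ℤ_{2q} given by μ(i,j) = (i+1,j), σν(i,j) = (-i,j+1), and τ(i,j) = (-i,-j), and let H = ⟨μ, σν, τ⟩, a subgroup of the symmetric group on ℤ_{2p} × ℤ_{2q}. Then the minimal normal subgroups of H are exactly ⟨μ²⟩, ⟨μ^p⟩, and ⟨ν²⟩, where μ² is the permutation (i,j) ↦ (i+2,j), μ^p is (i,j) ↦ (i+p,j), and ν² is (i,j) ↦ (i,j+2). -/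
open SimpleGraph

namespace OG4

variable {V : Type*} {W : Type*}

/-!
Every element of `H` is an affine map `(x, y) ↦ (εx + a, δy + b)` with signs `ε, δ = ±1` and
`εδ = (-1)^b`. Hence a nontrivial normal subgroup `M` contains a nontrivial translation by some
`(a, b)` with `b` even: either an element of `M` is one, or its commutator with `μ` or with `ν²` is.
Conjugating by `σν` then puts the translations by `(2a, 0)` and `(0, 2b)` into `M`. Since `2ℤ_{2p}`
and `2ℤ_{2q}` have prime order, `M` contains `μ²` or `ν²` unless `2a = 2b = 0`, and then `b` even
forces `(a, b) = (p, 0)`, so `μ^p ∈ M`. Conversely `μ²`, `μ^p` and `ν²` have prime order and are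
centralised or inverted by the generators of `H`, so each generates a minimal normal subgroup.
-/

open scoped commutatorElement

section GroupTheory

variable {G : Type*} [Group G]

lemma NormalIn.commutatorElement_mem {N H : Subgroup G} (hN : NormalIn N H) {g h : G}
    (hg : g ∈ N) (hh : h ∈ H) : ⁅g, h⁆ ∈ N := by
  simpa only [commutatorElement_def, mul_assoc] using
    N.mul_mem hg (hN.2 h hh _ (N.inv_mem hg))

lemma normalIn_closure_singleton {S : Set G} {x : G} (hx : x ∈ Subgroup.closure S)
    (hS : ∀ g ∈ S, g * x * g⁻¹ = x ∨ g * x * g⁻¹ = x⁻¹) :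
    NormalIn (Subgroup.closure {x}) (Subgroup.closure S) := by
  have hle : Subgroup.closure S ≤ Subgroup.normalizer (Subgroup.zpowers x : Set G) := by
    refine (Subgroup.closure_le _).2 fun g hg => ?_
    rw [SetLike.mem_coe, Subgroup.mem_normalizer_iff_map_conj_eq, MonoidHom.map_zpowers]
    rcases hS g hg with h | h <;> simp [h]
  rw [← Subgroup.zpowers_eq_closure]
  exact ⟨Subgroup.zpowers_le.2 hx, fun h hh n hn => (hle hh n).1 hn⟩

lemma isMinimalNormalIn_of_card_prime {N H : Subgroup G} (hN : NormalIn N H)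
    (hcard : (Nat.card N).Prime) : IsMinimalNormalIn N H := by
  have : Finite N := Nat.finite_of_card_ne_zero hcard.ne_zero
  refine ⟨hN, fun h => hcard.ne_one (Subgroup.card_eq_one.2 h), fun K _ hKN => ?_⟩
  rcases hcard.eq_one_or_self_of_dvd _ (Subgroup.card_dvd_of_le hKN) with h | h
  · exact Or.inl (Subgroup.card_eq_one.1 h)
  · exact Or.inr (Subgroup.eq_of_le_of_card_ge hKN h.ge)

end GroupTheory

section Translations

variable {α : Type*} [AddGroup α]

lemma addRight_ne_one {v : α} (hv : v ≠ 0) : Equiv.addRight v ≠ 1 :=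
  fun h => hv (by simpa using Equiv.congr_fun h 0)

lemma orderOf_addRight_eq_prime {v : α} {n : ℕ} [Fact n.Prime] (hn : n • v = 0)
    (hv : v ≠ 0) : orderOf (Equiv.addRight v) = n :=
  orderOf_eq_prime (by rw [Equiv.nsmul_addRight, hn, Equiv.addRight_zero]) (addRight_ne_one hv)

lemma addRight_mem_of_mem_zmultiples {M : Subgroup (Equiv.Perm α)} {v w : α}
    (hw : w ∈ AddSubgroup.zmultiples v) (hv : Equiv.addRight v ∈ M) : Equiv.addRight w ∈ M := by
  obtain ⟨k, rfl⟩ := hw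
  rw [← Equiv.zsmul_addRight]
  exact M.zpow_mem hv k

end Translations

section SignedAffine

variable {A B : Type*} [AddCommGroup A] [AddCommGroup B]

def signedAffine (ε : ℤˣ) (a : A) (δ : ℤˣ) (b : B) : Equiv.Perm (A × B) where
  toFun z := (ε • z.1 + a, δ • z.2 + b)
  invFun z := (ε • (z.1 - a), δ • (z.2 - b))
  left_inv z := by simp [smul_smul]
  right_inv z := by simp [smul_smul]

@[simp] lemma signedAffine_apply (ε : ℤˣ) (a : A) (δ : ℤˣ) (b : B) (z : A × B) :
    signedAffine ε a δ b z = (ε • z.1 + a, δ • z.2 + b) := rfl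

lemma signedAffine_mul (ε₁ ε₂ δ₁ δ₂ : ℤˣ) (a₁ a₂ : A) (b₁ b₂ : B) :
    signedAffine ε₁ a₁ δ₁ b₁ * signedAffine ε₂ a₂ δ₂ b₂ =
      signedAffine (ε₁ * ε₂) (ε₁ • a₂ + a₁) (δ₁ * δ₂) (δ₁ • b₂ + b₁) := by
  ext z <;> simp [mul_smul, add_assoc]

lemma signedAffine_inv (ε : ℤˣ) (a : A) (δ : ℤˣ) (b : B) :
    (signedAffine ε a δ b)⁻¹ = signedAffine ε (-(ε • a)) δ (-(δ • b)) := by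
  rw [inv_eq_iff_mul_eq_one, signedAffine_mul]
  ext z <;> simp [smul_smul]

lemma signedAffine_one_one (a : A) (b : B) : signedAffine 1 a 1 b = Equiv.addRight (a, b) := by
  ext z <;> simp

lemma signedAffine_conj_addRight (ε : ℤˣ) (a : A) (δ : ℤˣ) (b : B) (v : A × B) :
    signedAffine ε a δ b * Equiv.addRight v * (signedAffine ε a δ b)⁻¹ =
      Equiv.addRight (ε • v.1, δ • v.2) := by
  rw [mul_inv_eq_iff_eq_mul]
  ext z <;> simp [smul_add, add_right_comm]

lemma commutatorElement_signedAffine_addRight (ε : ℤˣ) (a : A) (δ : ℤˣ) (b : B) (v : A × B) :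
    ⁅signedAffine ε a δ b, Equiv.addRight v⁆ = Equiv.addRight (ε • v.1 - v.1, δ • v.2 - v.2) := by
  rw [commutatorElement_def, signedAffine_conj_addRight, Equiv.neg_addRight, ← Equiv.addRight_add]
  ext z <;> simp [sub_eq_neg_add, add_assoc]

end SignedAffine

section Generators

variable (r s : ℕ)

lemma mu_eq_addRight : mu r s = Equiv.addRight (1, 0) := by
  ext z <;> simp [mu]

lemma muSq_eq_addRight : muSq r s = Equiv.addRight (2, 0) := by
  ext z <;> simp [muSq]

lemma muPow_eq_addRight (k : ℕ) : muPow r s k = Equiv.addRight ((k : ZMod r), (0 : ZMod s)) := by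
  ext z <;> simp [muPow]

lemma nuSq_eq_addRight : nuSq r s = Equiv.addRight (0, 2) := by
  ext z <;> simp [nuSq]

lemma sigmaNu_eq_signedAffine : sigmaNu r s = signedAffine (-1) 0 1 1 := by
  ext z <;> simp [sigmaNu]

lemma tau_eq_signedAffine : tau r s = signedAffine (-1) 0 (-1) 0 := by
  ext z <;> simp [tau]

lemma mu_pow (k : ℕ) : mu r s ^ k = muPow r s k := by
  rw [mu_eq_addRight, Equiv.nsmul_addRight, muPow_eq_addRight]
  simp

lemma sigmaNu_mul_self : sigmaNu r s * sigmaNu r s = nuSq r s := by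
  rw [sigmaNu_eq_signedAffine, signedAffine_mul, nuSq_eq_addRight, ← signedAffine_one_one]
  norm_num [one_add_one_eq_two]

lemma mu_mem_Hgroup : mu r s ∈ Hgroup r s := Subgroup.subset_closure (by simp)

lemma sigmaNu_mem_Hgroup : sigmaNu r s ∈ Hgroup r s := Subgroup.subset_closure (by simp)

lemma muPow_mem_Hgroup (k : ℕ) : muPow r s k ∈ Hgroup r s :=
  mu_pow r s k ▸ Subgroup.pow_mem _ (mu_mem_Hgroup r s) k

lemma muSq_mem_Hgroup : muSq r s ∈ Hgroup r s := by
  simpa [muPow_eq_addRight, muSq_eq_addRight] using muPow_mem_Hgroup r s 2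

lemma nuSq_mem_Hgroup : nuSq r s ∈ Hgroup r s :=
  sigmaNu_mul_self r s ▸ Subgroup.mul_mem _ (sigmaNu_mem_Hgroup r s) (sigmaNu_mem_Hgroup r s)

end Generators

section Parity

def parity (q : ℕ) : ZMod (2 * q) →+* ZMod 2 := ZMod.castHom (dvd_mul_right 2 q) (ZMod 2)

lemma parity_units_smul (q : ℕ) (δ : ℤˣ) (b : ZMod (2 * q)) : parity q (δ • b) = parity q b := by
  rcases Int.units_eq_one_or δ with rfl | rfl <;> simp [ZMod.neg_eq_self_mod_two]

variable (A : Type*) [AddCommGroup A] (q : ℕ)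

-- The invariant `εδ = (-1)^b` is what keeps the translations by `(a, q)`, `q` odd, out of `H`.
def paritySubgroup : Subgroup (Equiv.Perm (A × ZMod (2 * q))) where
  carrier := {g | ∃ ε a δ b, ε * δ = (-1 : ℤˣ) ^ parity q b ∧ g = signedAffine ε a δ b}
  one_mem' := ⟨1, 0, 1, 0, by simp, by rw [signedAffine_one_one, Prod.mk_zero_zero,
    Equiv.addRight_zero]⟩
  mul_mem' := by
    rintro _ _ ⟨ε₁, a₁, δ₁, b₁, h₁, rfl⟩ ⟨ε₂, a₂, δ₂, b₂, h₂, rfl⟩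
    refine ⟨_, _, _, _, ?_, signedAffine_mul ..⟩
    rw [map_add, parity_units_smul, uzpow_add, ← h₁, ← h₂, mul_mul_mul_comm, mul_comm]
  inv_mem' := by
    rintro _ ⟨ε, a, δ, b, h, rfl⟩
    exact ⟨_, _, _, _, by rw [map_neg, parity_units_smul, ZMod.neg_eq_self_mod_two, h],
      signedAffine_inv ..⟩

lemma Hgroup_le_paritySubgroup (r : ℕ) : Hgroup r (2 * q) ≤ paritySubgroup (ZMod r) q := by
  refine (Subgroup.closure_le _).2 ?_
  rintro _ (rfl | rfl | rfl)
  · exact ⟨1, 1, 1, 0, by simp, by rw [mu_eq_addRight, signedAffine_one_one]⟩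
  · exact ⟨-1, 0, 1, 1, by simp, sigmaNu_eq_signedAffine ..⟩
  · exact ⟨-1, 0, -1, 0, by simp, tau_eq_signedAffine ..⟩

end Parity

section ZModArith

lemma natCast_ne_zero_of_lt {m n : ℕ} (hm : m ≠ 0) (h : m < n) : (m : ZMod n) ≠ 0 := by
  rw [Ne, ZMod.natCast_eq_zero_iff]
  exact fun hd => (Nat.le_of_dvd (Nat.pos_of_ne_zero hm) hd).not_gt h

lemma two_ne_zero_of_prime {p : ℕ} (hp : p.Prime) : (2 : ZMod (2 * p)) ≠ 0 := by
  exact_mod_cast natCast_ne_zero_of_lt two_ne_zero (by linarith [hp.two_le])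

lemma two_mul_natCast_self_eq_zero (n : ℕ) : (2 : ZMod (2 * n)) * n = 0 := by
  exact_mod_cast ZMod.natCast_self (2 * n)

lemma eq_zero_or_eq_of_add_self_eq_zero {n : ℕ} [NeZero n] {c : ZMod (2 * n)}
    (hc : c + c = 0) : c = 0 ∨ c = n := by
  have hdvd : 2 * n ∣ 2 * c.val := by
    rw [← ZMod.natCast_eq_zero_iff]
    push_cast [ZMod.natCast_zmod_val]
    linear_combination hc
  obtain ⟨t, ht⟩ := Nat.dvd_of_mul_dvd_mul_left two_pos hdvd
  have hlt := ZMod.val_lt c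
  have ht2 : t < 2 := by nlinarith [NeZero.pos n]
  rw [← ZMod.natCast_zmod_val c, ht]
  interval_cases t <;> simp

lemma two_mem_zmultiples_add_self {p : ℕ} (hp : p.Prime) {c : ZMod (2 * p)} (hc : c + c ≠ 0) :
    (2 : ZMod (2 * p)) ∈ AddSubgroup.zmultiples (c + c) := by
  have : NeZero p := ⟨hp.ne_zero⟩
  have hndvd : ¬ p ∣ c.val := by
    rintro ⟨t, ht⟩
    apply hc
    rw [← ZMod.natCast_zmod_val c, ht, ← two_mul]
    exact_mod_cast (ZMod.natCast_eq_zero_iff _ _).2 (mul_assoc 2 p t ▸ dvd_mul_right _ _)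
  obtain ⟨u, v, huv⟩ := Nat.isCoprime_iff_coprime.2 ((hp.coprime_iff_not_dvd).2 hndvd)
  have huv' : (u : ZMod (2 * p)) * p + v * c = 1 := by
    simpa [ZMod.natCast_zmod_val] using congrArg (Int.cast : ℤ → ZMod (2 * p)) huv
  exact ⟨v, by
    simp only [zsmul_eq_mul]
    linear_combination 2 * huv' - u * two_mul_natCast_self_eq_zero p⟩

end ZModArith

section NormalSubgroupsOfH

lemma exists_addRight_mem_of_normalIn {r q : ℕ} (h2 : (2 : ZMod r) ≠ 0)
    (h4 : (4 : ZMod (2 * q)) ≠ 0) {M : Subgroup (Equiv.Perm (ZMod r × ZMod (2 * q)))}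
    (hM : NormalIn M (Hgroup r (2 * q))) (hM' : M ≠ ⊥) :
    ∃ v : ZMod r × ZMod (2 * q), v ≠ 0 ∧ parity q v.2 = 0 ∧ Equiv.addRight v ∈ M := by
  obtain ⟨g, hgM, hg1⟩ := (Subgroup.bot_or_exists_ne_one M).resolve_left hM'
  obtain ⟨ε, a, δ, b, hsign, rfl⟩ := Hgroup_le_paritySubgroup q r (hM.1 hgM)
  rcases Int.units_eq_one_or ε with rfl | rfl
  · rcases Int.units_eq_one_or δ with rfl | rfl
    · rw [signedAffine_one_one] at hgM hg1
      refine ⟨(a, b), fun h => hg1 (by rw [h, Equiv.addRight_zero]), ?_, hgM⟩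
      revert hsign
      generalize parity q b = x
      revert x
      decide
    · have h := hM.commutatorElement_mem hgM (nuSq_mem_Hgroup r (2 * q))
      rw [nuSq_eq_addRight, commutatorElement_signedAffine_addRight] at h
      refine ⟨(0, -4), by simpa using h4, ?_, by convert h using 3 <;> norm_num⟩
      simp only [map_neg, map_ofNat]
      decide
  · have h := hM.commutatorElement_mem hgM (mu_mem_Hgroup r (2 * q))
    rw [mu_eq_addRight, commutatorElement_signedAffine_addRight] at h
    exact ⟨(-2, 0), by simpa using h2, map_zero _, by convert h using 3 <;> norm_num⟩

lemma addRight_add_self_mem {r s : ℕ} {M : Subgroup (Equiv.Perm (ZMod r × ZMod s))}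
    (hM : NormalIn M (Hgroup r s)) {a : ZMod r} {b : ZMod s} (h : Equiv.addRight (a, b) ∈ M) :
    Equiv.addRight (a + a, 0) ∈ M ∧ Equiv.addRight (0, b + b) ∈ M := by
  have hconj := hM.2 _ (sigmaNu_mem_Hgroup r s) _ h
  rw [sigmaNu_eq_signedAffine, signedAffine_conj_addRight] at hconj
  constructor
  · simpa [← Equiv.addRight_add] using M.mul_mem h (M.inv_mem hconj)
  · simpa [← Equiv.addRight_add] using M.mul_mem hconj h

lemma muSq_mem_or_muPow_mem_or_nuSq_mem {p q : ℕ} (hp : p.Prime) (hq : q.Prime) (hqo : Odd q)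
    {M : Subgroup (Equiv.Perm (ZMod (2 * p) × ZMod (2 * q)))}
    (hM : NormalIn M (Hgroup (2 * p) (2 * q))) {v : ZMod (2 * p) × ZMod (2 * q)} (hv : v ≠ 0)
    (hpar : parity q v.2 = 0) (hvM : Equiv.addRight v ∈ M) :
    muSq (2 * p) (2 * q) ∈ M ∨ muPow (2 * p) (2 * q) p ∈ M ∨ nuSq (2 * p) (2 * q) ∈ M := by
  have : NeZero p := ⟨hp.ne_zero⟩
  have : NeZero q := ⟨hq.ne_zero⟩
  obtain ⟨a, b⟩ := v
  obtain ⟨haM, hbM⟩ := addRight_add_self_mem hM hvM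
  rw [muSq_eq_addRight, muPow_eq_addRight, nuSq_eq_addRight]
  by_cases hb : b + b = 0
  · obtain rfl : b = 0 := by
      refine (eq_zero_or_eq_of_add_self_eq_zero hb).resolve_right ?_
      rintro rfl
      simp [parity, ZMod.natCast_eq_one_iff_odd.2 hqo] at hpar
    by_cases ha : a + a = 0
    · rcases eq_zero_or_eq_of_add_self_eq_zero ha with rfl | rfl
      · exact absurd rfl hv
      · exact Or.inr (Or.inl hvM)
    · obtain ⟨k, hk⟩ := two_mem_zmultiples_add_self hp ha
      exact Or.inl (addRight_mem_of_mem_zmultiples ⟨k, by simp [hk]⟩ haM)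
  · obtain ⟨k, hk⟩ := two_mem_zmultiples_add_self hq hb
    exact Or.inr (Or.inr (addRight_mem_of_mem_zmultiples ⟨k, by simp [hk]⟩ hbM))

lemma isMinimalNormalIn_Hgroup_of_addRight {r s : ℕ} {a : ZMod r} {b : ZMod s}
    (hab : a = 0 ∨ b = 0) (hmem : Equiv.addRight (a, b) ∈ Hgroup r s)
    (hprime : (orderOf (Equiv.addRight (a, b))).Prime) :
    IsMinimalNormalIn (Subgroup.closure {Equiv.addRight (a, b)}) (Hgroup r s) := by
  refine isMinimalNormalIn_of_card_prime (normalIn_closure_singleton hmem ?_)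
    (by rwa [← Subgroup.zpowers_eq_closure, Nat.card_zpowers])
  rintro _ (rfl | rfl | rfl)
  · rw [mu_eq_addRight, ← signedAffine_one_one, signedAffine_conj_addRight]
    simp
  · rw [sigmaNu_eq_signedAffine, signedAffine_conj_addRight, Equiv.neg_addRight]
    rcases hab with rfl | rfl <;> simp
  · rw [tau_eq_signedAffine, signedAffine_conj_addRight, Equiv.neg_addRight]
    simp

lemma isMinimalNormalIn_muSq {p : ℕ} (hp : p.Prime) (s : ℕ) :
    IsMinimalNormalIn (Subgroup.closure {muSq (2 * p) s}) (Hgroup (2 * p) s) := by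
  have : Fact p.Prime := ⟨hp⟩
  have hmem := muSq_mem_Hgroup (2 * p) s
  rw [muSq_eq_addRight] at hmem ⊢
  refine isMinimalNormalIn_Hgroup_of_addRight (Or.inr rfl) hmem ?_
  rw [orderOf_addRight_eq_prime (n := p) ?_ (by simpa using two_ne_zero_of_prime hp)]
  · exact hp
  · ext <;> simp [mul_comm (p : ZMod (2 * p)), two_mul_natCast_self_eq_zero]

lemma isMinimalNormalIn_muPow {p : ℕ} (hp : p ≠ 0) (s : ℕ) :
    IsMinimalNormalIn (Subgroup.closure {muPow (2 * p) s p}) (Hgroup (2 * p) s) := by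
  have : Fact (2 : ℕ).Prime := ⟨Nat.prime_two⟩
  have hmem := muPow_mem_Hgroup (2 * p) s p
  rw [muPow_eq_addRight] at hmem ⊢
  refine isMinimalNormalIn_Hgroup_of_addRight (Or.inr rfl) hmem ?_
  rw [orderOf_addRight_eq_prime (n := 2) ?_ ?_]
  · exact Nat.prime_two
  · ext <;> simp [two_mul_natCast_self_eq_zero]
  · simpa using natCast_ne_zero_of_lt hp (by omega)

lemma isMinimalNormalIn_nuSq {q : ℕ} (hq : q.Prime) (r : ℕ) :
    IsMinimalNormalIn (Subgroup.closure {nuSq r (2 * q)}) (Hgroup r (2 * q)) := by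
  have : Fact q.Prime := ⟨hq⟩
  have hmem := nuSq_mem_Hgroup r (2 * q)
  rw [nuSq_eq_addRight] at hmem ⊢
  refine isMinimalNormalIn_Hgroup_of_addRight (Or.inl rfl) hmem ?_
  rw [orderOf_addRight_eq_prime (n := q) ?_ (by simpa using two_ne_zero_of_prime hq)]
  · exact hq
  · ext <;> simp [mul_comm (q : ZMod (2 * q)), two_mul_natCast_self_eq_zero]

end NormalSubgroupsOfH

theorem stmt16_general (p q : ℕ) (hp : p.Prime) (hq : q.Prime) (hqo : Odd q)
    (M : Subgroup (Equiv.Perm (ZMod (2 * p) × ZMod (2 * q)))) :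
    IsMinimalNormalIn M (Hgroup (2 * p) (2 * q)) ↔
      (M = Subgroup.closure {muSq (2 * p) (2 * q)} ∨
        M = Subgroup.closure {muPow (2 * p) (2 * q) p} ∨
        M = Subgroup.closure {nuSq (2 * p) (2 * q)}) := by
  have hμ2 := isMinimalNormalIn_muSq hp (2 * q)
  have hμp := isMinimalNormalIn_muPow hp.ne_zero (2 * q)
  have hν2 := isMinimalNormalIn_nuSq hq (2 * p)
  refine ⟨fun hM => ?_, by rintro (rfl | rfl | rfl) <;> assumption⟩
  have eq_of_mem {x} (hK : IsMinimalNormalIn (Subgroup.closure {x}) (Hgroup (2 * p) (2 * q)))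
      (hx : x ∈ M) : M = Subgroup.closure {x} :=
    ((hM.2.2 _ hK.1 ((Subgroup.closure_le M).2 (by simpa))).resolve_left hK.2.1).symm
  have h4 : (4 : ZMod (2 * q)) ≠ 0 := by
    have : q ≠ 2 := by rintro rfl; exact Nat.not_odd_iff_even.2 even_two hqo
    exact_mod_cast natCast_ne_zero_of_lt four_ne_zero (by have := hq.two_le; omega)
  obtain ⟨v, hv, hpar, hvM⟩ := exists_addRight_mem_of_normalIn (two_ne_zero_of_prime hp) h4 hM.1 hM.2.1
  rcases muSq_mem_or_muPow_mem_or_nuSq_mem hp hq hqo hM.1 hv hpar hvM with h | h | h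
  exacts [Or.inl (eq_of_mem hμ2 h), Or.inr (Or.inl (eq_of_mem hμp h)),
    Or.inr (Or.inr (eq_of_mem hν2 h))]

/-- the minimal normal subgroups of `H(2p,2q)` are exactly `⟨μ²⟩`, `⟨μ^p⟩` and
`⟨ν²⟩`. -/
theorem stmt16 (p q : ℕ) (hp : p.Prime) (hpo : Odd p) (hq : q.Prime) (hqo : Odd q)
    (M : Subgroup (Equiv.Perm (ZMod (2 * p) × ZMod (2 * q)))) :
    IsMinimalNormalIn M (Hgroup (2 * p) (2 * q)) ↔
      (M = Subgroup.closure {muSq (2 * p) (2 * q)} ∨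
        M = Subgroup.closure {muPow (2 * p) (2 * q) p} ∨
        M = Subgroup.closure {nuSq (2 * p) (2 * q)}) :=
  stmt16_general p q hp hq hqo M

end OG4
end
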